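/- arXiv:math/0509094 — 2 statements merged into one kernel-verified Lean document; each statement's English description precedes it below -/
import Mathlib

section
/- Let E_1, E_2 be complex Hilbert spaces and let A, W : E_1 → E_2 be contractions such that 1 + W A* is invertible (equivalently, 1 + A* W is invertible). Then 1 − Ψ_A(W) Ψ_A(W)* = D_{A*} (1 + W A*)^{-1} (1 − W W*) (1 + A W*)^{-1} D_{A*} as operators on E_2. -/
open ContinuousLinearMap Filter

set_option synthInstance.maxHeartbeats 1000000
set_option maxHeartbeats 1000000


/-- `PiLp` over complete fibers is complete. -/
instance PiLp.instCompleteSpace' (p : ENNReal) [Fact (1 ≤ p)] {ι : Type*} [Fintype ι]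
    (β : ι → Type*) [∀ i, NormedAddCommGroup (β i)] [∀ i, CompleteSpace (β i)] :
    CompleteSpace (PiLp p β) :=
  (UniformEquiv.completeSpace_iff
    { toEquiv := WithLp.equiv p (∀ i, β i)
      uniformContinuous_toFun := PiLp.uniformContinuous_ofLp p β
      uniformContinuous_invFun := PiLp.uniformContinuous_toLp p β }).mpr inferInstance

noncomputable section

variable {E₁ E₂ : Type*} [NormedAddCommGroup E₁] [InnerProductSpace ℂ E₁] [CompleteSpace E₁]
  [NormedAddCommGroup E₂] [InnerProductSpace ℂ E₂] [CompleteSpace E₂]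

/-- The defect operator `D_C = (1 - C*C)^(1/2)` of a contraction `C`. -/
def defect (C : E₁ →L[ℂ] E₂) : E₁ →L[ℂ] E₁ := CFC.sqrt (1 - adjoint C ∘L C)

/-- The defect operator `D_{C*} = (1 - C C*)^(1/2)` of a contraction `C`. -/
def defectStar (C : E₁ →L[ℂ] E₂) : E₂ →L[ℂ] E₂ := CFC.sqrt (1 - C ∘L adjoint C)

/-- The fractional transform `Ψ_A(W) = A + D_{A*} (1 + W A*)⁻¹ W D_A`. -/
def Psi (A W : E₁ →L[ℂ] E₂) : E₁ →L[ℂ] E₂ :=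
  A + defectStar A ∘L Ring.inverse (1 + W ∘L adjoint A) ∘L (W ∘L defect A)

/-- The defect space `𝒟_C = closure (D_C E₁)`. -/
def defectSpace (C : E₁ →L[ℂ] E₂) : Submodule ℂ E₁ :=
  (LinearMap.range (defect C).toLinearMap).topologicalClosure

/-- The defect space `𝒟_{C*} = closure (D_{C*} E₂)`. -/
def defectStarSpace (C : E₁ →L[ℂ] E₂) : Submodule ℂ E₂ :=
  (LinearMap.range (defectStar C).toLinearMap).topologicalClosure

theorem mem_defectSpace (C : E₁ →L[ℂ] E₂) (x : E₁) : defect C x ∈ defectSpace C :=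
  Submodule.le_topologicalClosure _ (LinearMap.mem_range_self (defect C).toLinearMap x)

theorem mem_defectStarSpace (C : E₁ →L[ℂ] E₂) (y : E₂) : defectStar C y ∈ defectStarSpace C :=
  Submodule.le_topologicalClosure _ (LinearMap.mem_range_self (defectStar C).toLinearMap y)

variable {H : Type*} [NormedAddCommGroup H] [InnerProductSpace ℂ H] [CompleteSpace H] {n : ℕ}

/-- `H^n` with its Hilbert space (ℓ²) structure. -/
abbrev Hn (H : Type*) (n : ℕ) : Type _ := PiLp 2 (fun _ : Fin n => H)

/-- The `i`-th coordinate projection `H^n → H`. -/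
def projL (i : Fin n) : Hn H n →L[ℂ] H :=
  ContinuousLinearMap.proj i ∘L
    (PiLp.continuousLinearEquiv 2 ℂ (fun _ : Fin n => H)).toContinuousLinearMap

/-- The `i`-th coordinate inclusion `H → H^n`. -/
def inclL (i : Fin n) : H →L[ℂ] Hn H n :=
  (PiLp.continuousLinearEquiv 2 ℂ (fun _ : Fin n => H)).symm.toContinuousLinearMap ∘L
    ContinuousLinearMap.pi (fun j => if j = i then ContinuousLinearMap.id ℂ H else 0)

/-- The row operator `H^n → H` associated to an `n`-tuple of operators. -/
def rowOp (T : Fin n → H →L[ℂ] H) : Hn H n →L[ℂ] H := ∑ i, T i ∘L projL i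

/-- The row operator `H^n → H`, `(x_1, …, x_n) ↦ Σ z_i x_i`, associated with `z ∈ ℂⁿ`. -/
def rowC (z : EuclideanSpace ℂ (Fin n)) : Hn H n →L[ℂ] H := ∑ i, z i • projL i

/-- The completely positive map `ρ_T(X) = Σ T_i X T_i^*`. -/
def rho (T : Fin n → H →L[ℂ] H) (X : H →L[ℂ] H) : H →L[ℂ] H :=
  ∑ i, T i ∘L X ∘L adjoint (T i)

/-- The components of a row operator `R : H^n → H`: `R_i = R ∘ ι_i`. -/
def comps (R : Hn H n →L[ℂ] H) : Fin n → H →L[ℂ] H := fun i => R ∘L inclL i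

/-- `φ_λ(T) = Ψ_𝛌(−T)` for a tuple `T` and `λ ∈ 𝔹ⁿ`. -/
def phiOp (lam : EuclideanSpace ℂ (Fin n)) (T : Fin n → H →L[ℂ] H) : Hn H n →L[ℂ] H :=
  Psi (rowC lam) (-(rowOp T))

/-- The full-space characteristic function
`Θ_R(z) = -R + D_{R*} (1 - 𝐳 R*)⁻¹ 𝐳 D_R : H^n → H` of a row contraction `R`. -/
def Theta (R : Hn H n →L[ℂ] H) (z : EuclideanSpace ℂ (Fin n)) : Hn H n →L[ℂ] H :=
  -R + defectStar R ∘L Ring.inverse (1 - rowC z ∘L adjoint R) ∘L (rowC z ∘L defect R)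

/-- The involutive automorphism `φ_λ` of the unit ball `𝔹ⁿ`:
`φ_λ(z) = λ - s_λ (1 - ⟨z,λ⟩)⁻¹ (z - (1 - s_λ) P_λ z)`, where `⟨z,λ⟩ = Σ z_i conj λ_i`,
`s_λ = (1 - |λ|²)^(1/2)` and `P_λ` is the projection onto the span of `λ` (`P_0 = 0`). -/
def ballAut (lam z : EuclideanSpace ℂ (Fin n)) : EuclideanSpace ℂ (Fin n) :=
  lam - ((Real.sqrt (1 - ‖lam‖ ^ 2) : ℂ) * (1 - (inner ℂ lam z : ℂ))⁻¹) •
    (z - ((1 : ℂ) - (Real.sqrt (1 - ‖lam‖ ^ 2) : ℂ)) •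
      (((inner ℂ lam z : ℂ) / ((‖lam‖ : ℂ) ^ 2)) • lam))



section Auxiliary

open Polynomial in
private theorem pow_intertwine' (A : E₁ →L[ℂ] E₂) {S : E₁ →L[ℂ] E₁} {T : E₂ →L[ℂ] E₂}
    (h : A ∘L S = T ∘L A) (n : ℕ) : A ∘L S ^ n = (T ^ n) ∘L A := by
  induction n with
  | zero => simp [pow_zero, ContinuousLinearMap.one_def, comp_id, id_comp]
  | succ n ih =>
    rw [pow_succ, pow_succ, ContinuousLinearMap.mul_def, ContinuousLinearMap.mul_def,
      ← ContinuousLinearMap.comp_assoc, ih, ContinuousLinearMap.comp_assoc, h,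
      ← ContinuousLinearMap.comp_assoc]

open Polynomial in
private theorem aeval_intertwine' (A : E₁ →L[ℂ] E₂) {S : E₁ →L[ℂ] E₁} {T : E₂ →L[ℂ] E₂}
    (h : A ∘L S = T ∘L A) (q : ℝ[X]) :
    A ∘L aeval S q = aeval T q ∘L A := by
  induction q using Polynomial.induction_on with
  | C r => simp [aeval_C, Algebra.algebraMap_eq_smul_one, comp_smulₛₗ,
      ContinuousLinearMap.smul_comp, ContinuousLinearMap.one_def, comp_id, id_comp]
  | add p q hp hq => simp [map_add, comp_add, ContinuousLinearMap.add_comp, hp, hq]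
  | monomial n r _ =>
    simp only [map_mul, aeval_C, map_pow, aeval_X, Algebra.algebraMap_eq_smul_one,
      smul_mul_assoc, one_mul, ContinuousLinearMap.smul_comp]
    rw [ContinuousLinearMap.comp_smul, pow_intertwine' A h]

open Polynomial in
private theorem cfc_intertwine' (A : E₁ →L[ℂ] E₂) {S : E₁ →L[ℂ] E₁} {T : E₂ →L[ℂ] E₂}
    (hS : 0 ≤ S) (hT : 0 ≤ T) (h : A ∘L S = T ∘L A) {f : ℝ → ℝ} (hf : Continuous f) :
    A ∘L cfc f S = cfc f T ∘L A := by
  have hSsa : IsSelfAdjoint S := hS.isSelfAdjoint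
  have hTsa : IsSelfAdjoint T := hT.isSelfAdjoint
  set M : ℝ := ‖S‖ * ‖(1 : E₁ →L[ℂ] E₁)‖ + ‖T‖ * ‖(1 : E₂ →L[ℂ] E₂)‖ with hM
  have hMS : ‖S‖ * ‖(1 : E₁ →L[ℂ] E₁)‖ ≤ M := by
    have : 0 ≤ ‖T‖ * ‖(1 : E₂ →L[ℂ] E₂)‖ := by positivity
    linarith
  have hMT : ‖T‖ * ‖(1 : E₂ →L[ℂ] E₂)‖ ≤ M := by
    have : 0 ≤ ‖S‖ * ‖(1 : E₁ →L[ℂ] E₁)‖ := by positivity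
    linarith
  have hspecS : spectrum ℝ S ⊆ Set.Icc 0 M := by
    intro x hx
    have h0 : 0 ≤ x := spectrum_nonneg_of_nonneg hS hx
    have h1 := spectrum.norm_le_norm_mul_of_mem hx
    rw [Real.norm_eq_abs, abs_of_nonneg h0] at h1
    exact ⟨h0, h1.trans hMS⟩
  have hspecT : spectrum ℝ T ⊆ Set.Icc 0 M := by
    intro x hx
    have h0 : 0 ≤ x := spectrum_nonneg_of_nonneg hT hx
    have h1 := spectrum.norm_le_norm_mul_of_mem hx
    rw [Real.norm_eq_abs, abs_of_nonneg h0] at h1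
    exact ⟨h0, h1.trans hMT⟩
  rw [← sub_eq_zero, ← norm_le_zero_iff]
  refine le_of_forall_gt_imp_ge_of_dense fun ε hε => ?_
  set δ : ℝ := ε / (2 * ‖A‖ + 1) with hδdef
  have hδ : 0 < δ := by positivity
  obtain ⟨p, hp⟩ := exists_polynomial_near_of_continuousOn 0 M f hf.continuousOn δ hδ
  have hbS : ‖cfc f S - aeval S p‖ ≤ δ := by
    rw [← cfc_polynomial p S, ← cfc_sub f p.eval S]
    refine norm_cfc_le hδ.le fun x hx => ?_
    rw [Real.norm_eq_abs, abs_sub_comm]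
    exact (hp x (hspecS hx)).le
  have hbT : ‖aeval T p - cfc f T‖ ≤ δ := by
    rw [← cfc_polynomial p T, ← cfc_sub p.eval f T]
    refine norm_cfc_le hδ.le fun x hx => ?_
    rw [Real.norm_eq_abs]
    exact (hp x (hspecT hx)).le
  have hsplit : A ∘L cfc f S - cfc f T ∘L A
      = A ∘L (cfc f S - aeval S p) + (aeval T p - cfc f T) ∘L A := by
    rw [comp_sub, ContinuousLinearMap.sub_comp, aeval_intertwine' A h]
    abel
  calc ‖A ∘L cfc f S - cfc f T ∘L A‖
      ≤ ‖A ∘L (cfc f S - aeval S p)‖ + ‖(aeval T p - cfc f T) ∘L A‖ := by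
        rw [hsplit]; exact norm_add_le _ _
    _ ≤ ‖A‖ * δ + δ * ‖A‖ := by
        gcongr
        · calc ‖A ∘L (cfc f S - aeval S p)‖ ≤ ‖A‖ * ‖cfc f S - aeval S p‖ := opNorm_comp_le _ _
            _ ≤ ‖A‖ * δ := by gcongr
        · calc ‖(aeval T p - cfc f T) ∘L A‖ ≤ ‖aeval T p - cfc f T‖ * ‖A‖ := opNorm_comp_le _ _
            _ ≤ δ * ‖A‖ := by gcongr
    _ ≤ ε := by
        have hpos : (0:ℝ) < 2 * ‖A‖ + 1 := by positivity
        have heq : ‖A‖ * δ + δ * ‖A‖ = 2 * ‖A‖ * δ := by ring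
        rw [heq, hδdef, ← mul_div_assoc, div_le_iff₀ hpos]
        nlinarith [norm_nonneg A, hε.le]

private theorem one_sub_adj_comp_nonneg (A : E₁ →L[ℂ] E₂) (hA : ‖A‖ ≤ 1) :
    (0 : E₁ →L[ℂ] E₁) ≤ 1 - adjoint A ∘L A := by
  rw [ContinuousLinearMap.nonneg_iff_isPositive]
  constructor
  · rw [← ContinuousLinearMap.isSelfAdjoint_iff_isSymmetric, IsSelfAdjoint, star_sub, star_one, star_eq_adjoint, adjoint_comp, adjoint_adjoint]
  · intro x
    have h1 : ((1 - adjoint A ∘L A) x) = x - adjoint A (A x) := rfl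
    rw [reApplyInnerSelf_apply, h1, inner_sub_left, adjoint_inner_left, map_sub,
      inner_self_eq_norm_sq, inner_self_eq_norm_sq]
    have h2 : ‖A x‖ ≤ ‖x‖ := by
      calc ‖A x‖ ≤ ‖A‖ * ‖x‖ := A.le_opNorm x
      _ ≤ 1 * ‖x‖ := by gcongr
      _ = ‖x‖ := one_mul _
    nlinarith [norm_nonneg (A x), norm_nonneg x]

private theorem one_sub_comp_adj_nonneg (A : E₁ →L[ℂ] E₂) (hA : ‖A‖ ≤ 1) :
    (0 : E₂ →L[ℂ] E₂) ≤ 1 - A ∘L adjoint A := by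
  have := one_sub_adj_comp_nonneg (adjoint A) (by rw [LinearIsometryEquiv.norm_map ContinuousLinearMap.adjoint A]; exact hA)
  rwa [adjoint_adjoint] at this

private theorem sqrt_eq_cfc_real {E : Type*} [NormedAddCommGroup E] [InnerProductSpace ℂ E]
    [CompleteSpace E] {x : E →L[ℂ] E} (hx : 0 ≤ x) :
    CFC.sqrt x = cfc Real.sqrt x := by
  have hsa : IsSelfAdjoint x := hx.isSelfAdjoint
  have hb : 0 ≤ cfc Real.sqrt x := cfc_nonneg fun y _ => Real.sqrt_nonneg y
  refine CFC.sqrt_unique ?_ hb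
  rw [← cfc_mul Real.sqrt Real.sqrt x]
  calc cfc (fun y => Real.sqrt y * Real.sqrt y) x
      = cfc (fun y : ℝ => y) x := by
        refine cfc_congr fun y hy => ?_
        exact Real.mul_self_sqrt (spectrum_nonneg_of_nonneg hx hy)
    _ = x := cfc_id ℝ x

private theorem defect_selfAdjoint (A : E₁ →L[ℂ] E₂) : IsSelfAdjoint (defect A) :=
  (CFC.sqrt_nonneg _).isSelfAdjoint

private theorem defectStar_selfAdjoint (A : E₁ →L[ℂ] E₂) : IsSelfAdjoint (defectStar A) :=
  (CFC.sqrt_nonneg _).isSelfAdjoint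

private theorem defect_sq (A : E₁ →L[ℂ] E₂) (hA : ‖A‖ ≤ 1) :
    defect A ∘L defect A = 1 - adjoint A ∘L A := by
  rw [← ContinuousLinearMap.mul_def]
  exact CFC.sqrt_mul_sqrt_self _ (one_sub_adj_comp_nonneg A hA)

private theorem defectStar_sq (A : E₁ →L[ℂ] E₂) (hA : ‖A‖ ≤ 1) :
    defectStar A ∘L defectStar A = 1 - A ∘L adjoint A := by
  rw [← ContinuousLinearMap.mul_def]
  exact CFC.sqrt_mul_sqrt_self _ (one_sub_comp_adj_nonneg A hA)

private theorem defect_intertwine (A : E₁ →L[ℂ] E₂) (hA : ‖A‖ ≤ 1) :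
    A ∘L defect A = defectStar A ∘L A := by
  rw [defect, defectStar, sqrt_eq_cfc_real (one_sub_adj_comp_nonneg A hA),
    sqrt_eq_cfc_real (one_sub_comp_adj_nonneg A hA)]
  refine cfc_intertwine' A (one_sub_adj_comp_nonneg A hA) (one_sub_comp_adj_nonneg A hA) ?_
    Real.continuous_sqrt
  simp only [comp_sub, ContinuousLinearMap.sub_comp, ContinuousLinearMap.one_def, comp_id, id_comp,
    ContinuousLinearMap.comp_assoc]

private theorem defect_intertwine_adj (A : E₁ →L[ℂ] E₂) (hA : ‖A‖ ≤ 1) :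
    defect A ∘L adjoint A = adjoint A ∘L defectStar A := by
  have h := congrArg ContinuousLinearMap.adjoint (defect_intertwine A hA)
  rwa [adjoint_comp, adjoint_comp, (defect_selfAdjoint A).adjoint_eq,
    (defectStar_selfAdjoint A).adjoint_eq] at h

private theorem ring_key {R : Type*} [Ring R] (a b c : R)
    (h1 : IsUnit (1 + b)) (h2 : IsUnit (1 + a)) :
    1 - (a * Ring.inverse (1 + a) + Ring.inverse (1 + b) * b
      + Ring.inverse (1 + b) * (c - b * a) * Ring.inverse (1 + a))
      = Ring.inverse (1 + b) * ((1 - c) * Ring.inverse (1 + a)) := by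
  have e1 : a * Ring.inverse (1 + a) = 1 - Ring.inverse (1 + a) := by
    have h := Ring.mul_inverse_cancel _ h2
    rw [add_mul, one_mul] at h
    exact eq_sub_of_add_eq' h
  have e2 : Ring.inverse (1 + b) * b = 1 - Ring.inverse (1 + b) := by
    have h := Ring.inverse_mul_cancel _ h1
    rw [mul_add, mul_one] at h
    exact eq_sub_of_add_eq' h
  have e4 : Ring.inverse (1 + b) * (b * a) * Ring.inverse (1 + a)
      = (1 - Ring.inverse (1 + b)) * (1 - Ring.inverse (1 + a)) := by
    rw [← mul_assoc, e2, mul_assoc, e1]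
  rw [mul_sub, sub_mul _ _ (Ring.inverse (1 + a)), e4, e1, e2]
  noncomm_ring

end Auxiliary

/-- `1 - Ψ_A(W) Ψ_A(W)* = D_{A*} (1 + WA*)⁻¹ (1 - WW*) (1 + AW*)⁻¹ D_{A*}`. -/
theorem statement3 (A W : E₁ →L[ℂ] E₂) (hA : ‖A‖ ≤ 1) (hW : ‖W‖ ≤ 1)
    (h1 : IsUnit ((1 : E₂ →L[ℂ] E₂) + W ∘L adjoint A))
    (h2 : IsUnit ((1 : E₁ →L[ℂ] E₁) + adjoint A ∘L W)) :
    1 - Psi A W ∘L adjoint (Psi A W) =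
      defectStar A ∘L Ring.inverse (1 + W ∘L adjoint A) ∘L
        ((1 - W ∘L adjoint W) ∘L (Ring.inverse (1 + A ∘L adjoint W) ∘L defectStar A)) := by
  -- notation
  set D := defect A with hD
  set Ds := defectStar A with hDs
  set a : E₂ →L[ℂ] E₂ := A ∘L adjoint W with ha
  set b : E₂ →L[ℂ] E₂ := W ∘L adjoint A with hb
  set c : E₂ →L[ℂ] E₂ := W ∘L adjoint W with hc
  have hstarN : star ((1 : E₂ →L[ℂ] E₂) + b) = 1 + a := by
    rw [star_add, star_one, hb, star_eq_adjoint, adjoint_comp, adjoint_adjoint, ha]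
  have hN' : IsUnit ((1 : E₂ →L[ℂ] E₂) + a) := hstarN ▸ h1.star
  set L : E₂ →L[ℂ] E₂ := Ring.inverse (1 + b) with hL
  set L' : E₂ →L[ℂ] E₂ := Ring.inverse (1 + a) with hL'
  have hLadj : adjoint L = L' := by
    rw [hL, hL', ← star_eq_adjoint, ← hstarN, Ring.inverse_star]
  have hPsi : Psi A W = A + Ds ∘L (L ∘L (W ∘L D)) := rfl
  have hPsiAdj : adjoint (Psi A W) = adjoint A + D ∘L (adjoint W ∘L (L' ∘L Ds)) := by
    rw [hPsi, map_add, adjoint_comp, adjoint_comp, adjoint_comp, hLadj,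
      (defect_selfAdjoint A).adjoint_eq, (defectStar_selfAdjoint A).adjoint_eq,
      ← hD, ← hDs, ContinuousLinearMap.comp_assoc, ContinuousLinearMap.comp_assoc]
  have hint : A ∘L D = Ds ∘L A := defect_intertwine A hA
  have hint' : D ∘L adjoint A = adjoint A ∘L Ds := defect_intertwine_adj A hA
  have hD2 : D ∘L D = 1 - adjoint A ∘L A := defect_sq A hA
  have hDs2 : Ds ∘L Ds = 1 - A ∘L adjoint A := defectStar_sq A hA
  -- the four product computations
  have T2 : A ∘L (D ∘L (adjoint W ∘L (L' ∘L Ds))) = Ds ∘L ((a * L') ∘L Ds) := by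
    rw [← ContinuousLinearMap.comp_assoc A D, hint]
    simp only [ContinuousLinearMap.mul_def, ContinuousLinearMap.comp_assoc, ha]
  have T3 : (Ds ∘L (L ∘L (W ∘L D))) ∘L adjoint A = Ds ∘L ((L * b) ∘L Ds) := by
    simp only [ContinuousLinearMap.mul_def, ContinuousLinearMap.comp_assoc, hb]
    rw [hint']
  have T4 : (Ds ∘L (L ∘L (W ∘L D))) ∘L (D ∘L (adjoint W ∘L (L' ∘L Ds)))
      = Ds ∘L ((L * (c - b * a) * L') ∘L Ds) := by
    have hDDX : D ∘L (D ∘L (adjoint W ∘L (L' ∘L Ds)))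
        = adjoint W ∘L (L' ∘L Ds) - adjoint A ∘L (A ∘L (adjoint W ∘L (L' ∘L Ds))) := by
      rw [← ContinuousLinearMap.comp_assoc D D, hD2]
      simp only [ContinuousLinearMap.sub_comp, ContinuousLinearMap.one_def, id_comp,
        ContinuousLinearMap.comp_assoc]
    simp only [ContinuousLinearMap.mul_def, ContinuousLinearMap.comp_assoc, hDDX,
      comp_sub, ContinuousLinearMap.sub_comp, hc, hb, ha]
  -- expansion of Ψ Ψ*
  have hexp : Psi A W ∘L adjoint (Psi A W)
      = A ∘L adjoint A + Ds ∘L (((a * L') + (L * b) + (L * (c - b * a) * L')) ∘L Ds) := by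
    rw [hPsiAdj, hPsi, comp_add, ContinuousLinearMap.add_comp, ContinuousLinearMap.add_comp,
      T2, T3, T4, ContinuousLinearMap.add_comp, ContinuousLinearMap.add_comp, comp_add, comp_add]
    abel
  -- final assembly
  have hkey := ring_key a b c h1 hN'
  calc 1 - Psi A W ∘L adjoint (Psi A W)
      = (1 - A ∘L adjoint A) - Ds ∘L (((a * L') + (L * b) + (L * (c - b * a) * L')) ∘L Ds) := by
        rw [hexp]; abel
    _ = Ds ∘L ((1 - ((a * L') + (L * b) + (L * (c - b * a) * L'))) ∘L Ds) := by
        rw [← hDs2, ContinuousLinearMap.sub_comp, ContinuousLinearMap.one_def, id_comp, comp_sub]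
    _ = Ds ∘L ((L * ((1 - c) * L')) ∘L Ds) := by rw [hkey]
    _ = defectStar A ∘L Ring.inverse (1 + W ∘L adjoint A) ∘L
        ((1 - W ∘L adjoint W) ∘L (Ring.inverse (1 + A ∘L adjoint W) ∘L defectStar A)) := by
        simp only [ContinuousLinearMap.mul_def, ContinuousLinearMap.comp_assoc, ← hDs, ← hL, ← hL',
          ← ha, ← hb, ← hc]


end
end

section
/- Let n ≥ 1 and let λ, z lie in the open unit ball 𝔹^n of ℂ^n. Identify each w ∈ 𝔹^n with the (strictly contractive) linear map ℂ^n → ℂ, (x_1,…,x_n) ↦ Σ_{i=1}^n w_i x_i. Then φ_λ(z) = Ψ_λ(−z), i.e. the involutive automorphism of the ball satisfies φ_λ(z) = λ − D_{λ*} (1 − z λ*)^{-1} z D_λ, where z λ* = ⟨z, λ⟩ and D_{λ*} = (1 − |λ|²)^{1/2}. -/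
open ContinuousLinearMap Filter

set_option synthInstance.maxHeartbeats 1000000
set_option maxHeartbeats 1000000


noncomputable section

variable {E₁ E₂ : Type*} [NormedAddCommGroup E₁] [InnerProductSpace ℂ E₁] [CompleteSpace E₁]
  [NormedAddCommGroup E₂] [InnerProductSpace ℂ E₂] [CompleteSpace E₂]

variable {H : Type*} [NormedAddCommGroup H] [InnerProductSpace ℂ H] [CompleteSpace H] {n : ℕ}

section Statement10Aux

lemma aux_projL_apply {n : ℕ} (i : Fin n) (x : Hn ℂ n) : projL i x = x i := rfl

lemma aux_Hn_sum_apply {n : ℕ} {ι : Type*} (s : Finset ι) (f : ι → Hn ℂ n) (j : Fin n) :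
    (∑ i ∈ s, f i) j = ∑ i ∈ s, f i j := by
  rw [show (∑ i ∈ s, f i) j = projL (H := ℂ) j (∑ i ∈ s, f i) from rfl, map_sum]
  rfl

lemma aux_inclL_apply {n : ℕ} (i j : Fin n) (c : ℂ) :
    inclL (H := ℂ) i c j = if j = i then c else 0 := by
  show ((if j = i then ContinuousLinearMap.id ℂ ℂ else 0) c) = if j = i then c else 0
  by_cases h : j = i <;> simp [h]

lemma aux_rowC_apply {n : ℕ} (w : EuclideanSpace ℂ (Fin n)) (x : Hn ℂ n) :
    rowC (H := ℂ) w x = ∑ i, w i * x i := by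
  simp [rowC, ContinuousLinearMap.sum_apply, aux_projL_apply]

lemma aux_adjoint_rowC' {n : ℕ} (w : EuclideanSpace ℂ (Fin n)) :
    adjoint (rowC (H := ℂ) w) = ∑ i, (starRingEnd ℂ (w i)) • inclL i := by
  symm
  rw [eq_adjoint_iff]
  intro x y
  simp only [ContinuousLinearMap.sum_apply, ContinuousLinearMap.smul_apply, aux_rowC_apply,
    PiLp.inner_apply, RCLike.inner_apply]
  rw [Finset.sum_mul]
  congr 1
  funext j
  simp only [aux_Hn_sum_apply, PiLp.smul_apply, aux_inclL_apply, smul_eq_mul, mul_ite, mul_zero]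
  rw [Finset.sum_ite_eq Finset.univ j]
  simp [mul_comm, mul_left_comm, mul_assoc]

lemma aux_adjoint_rowC_apply {n : ℕ} (w : EuclideanSpace ℂ (Fin n)) (c : ℂ) (i : Fin n) :
    adjoint (rowC (H := ℂ) w) c i = starRingEnd ℂ (w i) * c := by
  rw [aux_adjoint_rowC']
  simp only [ContinuousLinearMap.sum_apply, aux_Hn_sum_apply, ContinuousLinearMap.smul_apply,
    PiLp.smul_apply, aux_inclL_apply, smul_eq_mul, mul_ite, mul_zero]
  rw [Finset.sum_ite_eq Finset.univ i]
  simp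

lemma aux_adjoint_inclL {n : ℕ} (i : Fin n) : adjoint (inclL (H := ℂ) i) = projL i := by
  have h : projL (H := ℂ) i = adjoint (inclL i) := by
    rw [eq_adjoint_iff]
    intro x c
    simp only [aux_projL_apply, RCLike.inner_apply, PiLp.inner_apply, aux_inclL_apply, mul_ite,
      mul_zero]
    simp only [ite_mul, zero_mul]
    rw [Finset.sum_ite_eq' Finset.univ i]
    simp
  rw [h]

lemma aux_projL_comp_inclL {n : ℕ} (i : Fin n) : projL (H := ℂ) i ∘L inclL i = 1 := by
  ext c
  simp [aux_projL_apply, aux_inclL_apply]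

lemma aux_inner_sum_eq {n : ℕ} (v w : EuclideanSpace ℂ (Fin n)) :
    (inner ℂ v w : ℂ) = ∑ i, starRingEnd ℂ (v i) * w i := by
  simp [PiLp.inner_apply, RCLike.inner_apply, mul_comm]

lemma aux_rowC_comp_adjoint {n : ℕ} (w v : EuclideanSpace ℂ (Fin n)) :
    rowC (H := ℂ) w ∘L adjoint (rowC (H := ℂ) v) = (inner ℂ v w : ℂ) • 1 := by
  refine ContinuousLinearMap.ext fun c => ?_
  simp only [ContinuousLinearMap.comp_apply, aux_rowC_apply, aux_adjoint_rowC_apply,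
    ContinuousLinearMap.smul_apply, ContinuousLinearMap.one_apply, smul_eq_mul, aux_inner_sum_eq,
    Finset.sum_mul]
  congr 1; funext i; ring

lemma aux_Hn_ext {n : ℕ} {x y : Hn ℂ n} (h : ∀ i, x i = y i) : x = y := PiLp.ext h

lemma aux_K_apply {n : ℕ} (w : EuclideanSpace ℂ (Fin n)) (x : Hn ℂ n) (i : Fin n) :
    (adjoint (rowC (H := ℂ) w) ∘L rowC (H := ℂ) w) x i
      = starRingEnd ℂ (w i) * ∑ j, w j * x j := by
  simp [ContinuousLinearMap.comp_apply, aux_adjoint_rowC_apply, aux_rowC_apply, Finset.mul_sum]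

lemma aux_rowC_comp_K {n : ℕ} (lam z : EuclideanSpace ℂ (Fin n)) :
    rowC (H := ℂ) z ∘L (adjoint (rowC (H := ℂ) lam) ∘L rowC (H := ℂ) lam)
      = (inner ℂ lam z : ℂ) • rowC (H := ℂ) lam := by
  refine ContinuousLinearMap.ext fun x => ?_
  simp only [ContinuousLinearMap.comp_apply, aux_rowC_apply, aux_adjoint_rowC_apply,
    ContinuousLinearMap.smul_apply, smul_eq_mul, aux_inner_sum_eq, Finset.sum_mul]
  congr 1; funext i; ring

lemma aux_rowC_smul {n : ℕ} (a : ℂ) (w : EuclideanSpace ℂ (Fin n)) :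
    rowC (H := ℂ) (a • w) = a • rowC (H := ℂ) w := by
  refine ContinuousLinearMap.ext fun x => ?_
  simp [aux_rowC_apply, PiLp.smul_apply, Finset.mul_sum, mul_assoc]

lemma aux_rowC_sub {n : ℕ} (w v : EuclideanSpace ℂ (Fin n)) :
    rowC (H := ℂ) (w - v) = rowC (H := ℂ) w - rowC (H := ℂ) v := by
  refine ContinuousLinearMap.ext fun x => ?_
  simp [aux_rowC_apply, PiLp.sub_apply, sub_mul, Finset.sum_sub_distrib]

lemma aux_rowC_neg {n : ℕ} (w : EuclideanSpace ℂ (Fin n)) :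
    rowC (H := ℂ) (-w) = -rowC (H := ℂ) w := by
  refine ContinuousLinearMap.ext fun x => ?_
  simp [aux_rowC_apply, PiLp.neg_apply, Finset.sum_neg_distrib]

lemma aux_rowC_zero {n : ℕ} : rowC (H := ℂ) (0 : EuclideanSpace ℂ (Fin n)) = 0 := by
  refine ContinuousLinearMap.ext fun x => ?_
  simp [aux_rowC_apply]

lemma aux_sqrt_one {E : Type*} [NormedAddCommGroup E] [InnerProductSpace ℂ E]
    [CompleteSpace E] : CFC.sqrt (1 : E →L[ℂ] E) = 1 :=
  CFC.sqrt_unique (one_mul 1) (by simpa using star_mul_self_nonneg (1 : E →L[ℂ] E))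

lemma aux_real_sq (r : ℝ) :
    star ((r : ℝ) : ℂ) * ((r : ℝ) : ℂ) = ((r * r : ℝ) : ℂ) := by
  rw [RCLike.star_def, Complex.conj_ofReal, ← Complex.ofReal_mul]

end Statement10Aux

set_option maxHeartbeats 4000000

/-- Identifying `w ∈ 𝔹ⁿ` with the row contraction `ℂⁿ → ℂ`,
the ball automorphism satisfies `φ_λ(z) = Ψ_λ(-z)`. -/
theorem statement10 {n : ℕ} (hn : 1 ≤ n) (lam z : EuclideanSpace ℂ (Fin n))
    (hlam : ‖lam‖ < 1) (hz : ‖z‖ < 1) :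
    rowC (H := ℂ) (ballAut lam z) = Psi (rowC (H := ℂ) lam) (-(rowC (H := ℂ) z)) := by
  classical
  by_cases hlam0 : lam = 0
  · subst hlam0
    rw [aux_rowC_zero]
    have hadj : adjoint (0 : Hn ℂ n →L[ℂ] ℂ) = 0 := by
      rw [show (0 : Hn ℂ n →L[ℂ] ℂ) = adjoint 0 from ?_]
      · rw [adjoint_adjoint]
      · rw [eq_adjoint_iff]; intro x y; simp
    have hdef : defect (0 : Hn ℂ n →L[ℂ] ℂ) = 1 := by
      rw [defect, hadj, zero_comp, sub_zero, aux_sqrt_one]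
    have hdefs : defectStar (0 : Hn ℂ n →L[ℂ] ℂ) = 1 := by
      rw [defectStar, hadj, comp_zero, sub_zero, aux_sqrt_one]
    rw [Psi, hdef, hdefs, hadj, comp_zero, add_zero, Ring.inverse_one]
    have hball : ballAut (0 : EuclideanSpace ℂ (Fin n)) z = -z := by
      unfold ballAut
      simp
    rw [hball, aux_rowC_neg]
    simp [ContinuousLinearMap.one_def]
  · have hnl : ‖lam‖ ≠ 0 := norm_ne_zero_iff.mpr hlam0
    set s : ℝ := Real.sqrt (1 - ‖lam‖ ^ 2) with hs_def
    have hm1 : ‖lam‖ ^ 2 < 1 := by nlinarith [norm_nonneg lam]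
    have hs0 : 0 ≤ s := Real.sqrt_nonneg _
    have hssq : s ^ 2 = 1 - ‖lam‖ ^ 2 := Real.sq_sqrt (by linarith)
    set m : ℝ := ‖lam‖ ^ 2 with hm_def
    have hm0 : m ≠ 0 := pow_ne_zero 2 hnl
    set R := rowC (H := ℂ) lam with hR
    set K := adjoint R ∘L R with hK_def
    set τ : ℂ := (((1 - s) / m : ℝ) : ℂ) with hτ_def
    set B : Hn ℂ n →L[ℂ] Hn ℂ n := 1 - τ • K with hB_def
    -- basic identities
    have hinner_self : (inner ℂ lam lam : ℂ) = ((m : ℝ) : ℂ) := by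
      rw [inner_self_eq_norm_sq_to_K, hm_def]; push_cast; rfl
    have hRR : R ∘L adjoint R = ((m : ℝ) : ℂ) • 1 := by
      rw [hR, aux_rowC_comp_adjoint, hinner_self]
    have hKK : K * K = ((m : ℝ) : ℂ) • K := by
      show K ∘L K = ((m : ℝ) : ℂ) • K
      rw [hK_def, ContinuousLinearMap.comp_assoc, ← ContinuousLinearMap.comp_assoc R,
        hRR, ContinuousLinearMap.smul_comp, ContinuousLinearMap.one_def,
        ContinuousLinearMap.id_comp, ContinuousLinearMap.comp_smul]
    have hstarK : star K = K := by
      rw [ContinuousLinearMap.star_eq_adjoint, hK_def, adjoint_comp, adjoint_adjoint]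
    -- positivity ingredients
    set i0 : Fin n := ⟨0, hn⟩ with hi0
    set M : Hn ℂ n →L[ℂ] Hn ℂ n := inclL i0 ∘L R with hM_def
    have hstarM : star M * M = K := by
      show adjoint M ∘L M = K
      rw [hM_def, adjoint_comp, aux_adjoint_inclL, ContinuousLinearMap.comp_assoc,
        ← ContinuousLinearMap.comp_assoc (projL i0), aux_projL_comp_inclL,
        ContinuousLinearMap.one_def, ContinuousLinearMap.id_comp, hK_def]
    set Pr : Hn ℂ n →L[ℂ] Hn ℂ n := (((m⁻¹ : ℝ)) : ℂ) • K with hPr_def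
    have hPrK : star ((((‖lam‖⁻¹ : ℝ)) : ℂ) • M) * ((((‖lam‖⁻¹ : ℝ)) : ℂ) • M) = Pr := by
      rw [star_smul, smul_mul_smul_comm, hstarM, hPr_def, aux_real_sq]
      congr 1
      rw [hm_def]
      exact congrArg Complex.ofReal (by rw [pow_two, mul_inv])
    have hPr2 : Pr * Pr = Pr := by
      rw [hPr_def, smul_mul_smul_comm, hKK, smul_smul]
      congr 1
      push_cast
      field_simp
    have hPrStar : star Pr = Pr := by
      rw [hPr_def, star_smul, hstarK]
      congr 1
      rw [RCLike.star_def, Complex.conj_ofReal]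
    have hPos1 : (0 : Hn ℂ n →L[ℂ] Hn ℂ n) ≤ (s : ℂ) • Pr := by
      have h := star_mul_self_nonneg
        (((Real.sqrt s : ℝ) : ℂ) • ((((‖lam‖⁻¹ : ℝ)) : ℂ) • M))
      rw [star_smul, smul_mul_smul_comm, hPrK, aux_real_sq, Real.mul_self_sqrt hs0] at h
      exact h
    have hPos2 : (0 : Hn ℂ n →L[ℂ] Hn ℂ n) ≤ 1 - Pr := by
      have h := star_mul_self_nonneg (1 - Pr)
      have hq : (1 - Pr) * (1 - Pr) = 1 - Pr := by
        simp only [sub_mul, mul_sub, one_mul, mul_one, hPr2]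
        abel
      rwa [star_sub, star_one, hPrStar, hq] at h
    have hτPr : τ • K = ((1 : ℂ) - (s : ℂ)) • Pr := by
      rw [hPr_def, smul_smul, hτ_def]
      congr 1
      push_cast
      ring
    have hBdecomp : B = (s : ℂ) • Pr + (1 - Pr) := by
      rw [hB_def, hτPr]
      module
    have hBpos : (0 : Hn ℂ n →L[ℂ] Hn ℂ n) ≤ B := by
      rw [hBdecomp]
      exact add_nonneg hPos1 hPos2
    have hscal : τ + τ - τ * τ * ((m : ℝ) : ℂ) = 1 := by
      rw [hτ_def]
      push_cast
      have : ((1 : ℝ) - s) / m + (1 - s) / m - (1 - s) / m * ((1 - s) / m) * m = 1 := by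
        field_simp
        nlinarith [hssq]
      exact_mod_cast congrArg (Complex.ofReal) this
    have hBsq : B * B = 1 - K := by
      rw [hB_def]
      simp only [sub_mul, mul_sub, one_mul, mul_one]
      rw [smul_mul_smul_comm, hKK, smul_smul]
      rw [show (1 : Hn ℂ n →L[ℂ] Hn ℂ n) - τ • K - (τ • K - (τ * τ * ((m : ℝ) : ℂ)) • K)
          = 1 - (τ + τ - τ * τ * ((m : ℝ) : ℂ)) • K by module, hscal, one_smul]
    have hdefect : defect R = B := by
      rw [defect]
      exact CFC.sqrt_unique (by rw [hBsq, hK_def]) hBpos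
    have hdefectStar : defectStar R = (s : ℂ) • 1 := by
      rw [defectStar, hRR, show (1 : ℂ →L[ℂ] ℂ) - ((m : ℝ) : ℂ) • 1 = (((1 - m : ℝ)) : ℂ) • 1 by
        push_cast; module]
      refine CFC.sqrt_unique ?_ ?_
      · rw [smul_mul_smul_comm, one_mul, ← Complex.ofReal_mul, ← pow_two, hssq]
      · have h := star_mul_self_nonneg (((Real.sqrt s : ℝ) : ℂ) • (1 : ℂ →L[ℂ] ℂ))
        rwa [star_smul, star_one, smul_mul_smul_comm, one_mul, aux_real_sq,
          Real.mul_self_sqrt hs0] at h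
    -- the inverse
    set c : ℂ := 1 - (inner ℂ lam z : ℂ) with hc_def
    have hc : c ≠ 0 := by
      have h1 : ‖(inner ℂ lam z : ℂ)‖ < 1 := by
        calc ‖(inner ℂ lam z : ℂ)‖ ≤ ‖lam‖ * ‖z‖ := norm_inner_le_norm lam z
        _ < 1 := by nlinarith [norm_nonneg lam, norm_nonneg z]
      intro h
      rw [hc_def, sub_eq_zero] at h
      rw [← h] at h1
      simp at h1
    have hca : (1 : ℂ →L[ℂ] ℂ) + (-(rowC (H := ℂ) z)) ∘L adjoint R = c • 1 := by
      rw [neg_comp, hR, aux_rowC_comp_adjoint, hc_def]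
      module
    have hmulc : (c • (1 : ℂ →L[ℂ] ℂ)) * (c⁻¹ • 1) = 1 := by
      rw [smul_mul_smul_comm, one_mul, mul_inv_cancel₀ hc, one_smul]
    have hmulc' : (c⁻¹ • (1 : ℂ →L[ℂ] ℂ)) * (c • 1) = 1 := by
      rw [smul_mul_smul_comm, one_mul, inv_mul_cancel₀ hc, one_smul]
    have hinv : Ring.inverse ((1 : ℂ →L[ℂ] ℂ) + (-(rowC (H := ℂ) z)) ∘L adjoint R)
        = c⁻¹ • 1 := by
      rw [hca]
      exact Ring.inverse_unit ⟨c • 1, c⁻¹ • 1, hmulc, hmulc'⟩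
    -- assembling
    have hWB : (-(rowC (H := ℂ) z)) ∘L B = -(rowC (H := ℂ) z) + (τ * (inner ℂ lam z : ℂ)) • R := by
      rw [hB_def, neg_comp, comp_sub, ContinuousLinearMap.comp_smul, hK_def, hR,
        aux_rowC_comp_K, ContinuousLinearMap.one_def, ContinuousLinearMap.comp_id, smul_smul]
      module
    have hcoef : ((1 : ℂ) - (s : ℂ)) • (((inner ℂ lam z : ℂ) / ((‖lam‖ : ℂ) ^ 2)) • R)
        = (τ * (inner ℂ lam z : ℂ)) • R := by
      rw [smul_smul, hτ_def, hm_def]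
      congr 1
      push_cast
      ring
    rw [Psi, hdefect, hdefectStar, hinv, hWB]
    simp only [ContinuousLinearMap.comp_smul, ContinuousLinearMap.smul_comp,
      ContinuousLinearMap.one_def, ContinuousLinearMap.id_comp, ContinuousLinearMap.comp_id]
    rw [ballAut, aux_rowC_sub, aux_rowC_smul, aux_rowC_sub, aux_rowC_smul, aux_rowC_smul, ← hR,
      ← hm_def, ← hs_def, ← hc_def, hcoef]
    module

end
end
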